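/- arXiv:1105.3217 — 2 statements merged into one kernel-verified Lean document; each statement's English description precedes it below -/
import Mathlib

section
/- For ω with 0 ≤ arg(ω) < π, and complex numbers ε = ε̃ + iσ/ω, μ = μ̃ + iσ'/ω with ε̃, μ̃ > 0 and σ, σ' ≥ 0 real, the product k = ω√(εμ) (with square roots of ωε and ωμ taken with argument in [0, π/2]) satisfies 0 ≤ arg(k) < π. -/
open Complex

/-- For `ω` with `0 ≤ arg ω < π`, and `ε = ε̃ + iσ/ω`, `μ = μ̃ + iσ'/ω` with
`ε̃, μ̃ > 0`, `σ, σ' ≥ 0`, the wave number `k = √(ωε)·√(ωμ)` (square roots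
chosen with argument in `[0, π/2]`) satisfies `0 ≤ arg k < π`. -/
theorem wavenumber_arg_upper_half
    (ω : ℂ) (hω : ω ≠ 0) (hω1 : 0 ≤ ω.arg) (hω2 : ω.arg < Real.pi)
    (εt μt σ σ' : ℝ) (hεt : 0 < εt) (hμt : 0 < μt) (hσ : 0 ≤ σ) (hσ' : 0 ≤ σ')
    (ε μ : ℂ)
    (hεdef : ε = (εt : ℂ) + I * σ / ω) (hμdef : μ = (μt : ℂ) + I * σ' / ω)
    (a b : ℂ)
    (ha : a ^ 2 = ω * ε) (hb : b ^ 2 = ω * μ)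
    (ha1 : 0 ≤ a.arg) (ha2 : a.arg ≤ Real.pi / 2)
    (hb1 : 0 ≤ b.arg) (hb2 : b.arg ≤ Real.pi / 2)
    (k : ℂ) (hk : k = a * b) :
    0 ≤ k.arg ∧ k.arg < Real.pi := by
  have hωim : 0 ≤ ω.im := Complex.arg_nonneg_iff.mp hω1
  have hkey : ∀ (t s : ℝ), 0 < t → 0 ≤ s → ∀ c : ℂ,
      c ^ 2 = ω * ((t : ℂ) + I * s / ω) → c.arg ≠ Real.pi / 2 ∧ c ≠ 0 := by
    intro t s ht hs c hc
    have hz : ω * ((t : ℂ) + I * s / ω) = (t : ℂ) * ω + I * s := by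
      field_simp
    rw [hz] at hc
    have him2 : (c ^ 2).im = t * ω.im + s := by rw [hc]; simp
    have hre2 : (c ^ 2).re = t * ω.re := by rw [hc]; simp
    have hωre : ω.im = 0 → 0 < ω.re := by
      intro h0
      rcases lt_trichotomy ω.re 0 with h | h | h
      · exact absurd (Complex.arg_eq_pi_iff.mpr ⟨h, h0⟩ ▸ hω2) (lt_irrefl _)
      · exact absurd (Complex.ext h h0) hω
      · exact h
    constructor
    · intro hargc
      obtain ⟨hre, him⟩ := Complex.arg_eq_pi_div_two_iff.mp hargc
      have h1 : (c ^ 2).im = 0 := by simp [pow_two, Complex.mul_im, hre]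
      have h2 : (c ^ 2).re = -c.im ^ 2 := by
        simp [pow_two, Complex.mul_re, hre, sq]
      have hωim0 : ω.im = 0 := by nlinarith [him2, h1]
      have hs0 : s = 0 := by nlinarith [him2, h1]
      have := hωre hωim0
      nlinarith [hre2, h2, him]
    · intro hc0
      rw [hc0] at hc
      have h1 : t * ω.im + s = 0 := by
        have := congrArg Complex.im hc.symm; simpa using this
      have h2 : t * ω.re = 0 := by
        have := congrArg Complex.re hc.symm; simpa using this
      have hωim0 : ω.im = 0 := by nlinarith
      have := hωre hωim0
      nlinarith
  obtain ⟨haarg, ha0⟩ := hkey εt σ hεt hσ a (hεdef ▸ ha)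
  obtain ⟨hbarg, hb0⟩ := hkey μt σ' hμt hσ' b (hμdef ▸ hb)
  have hsum : a.arg + b.arg < Real.pi := by
    have h1 : a.arg < Real.pi / 2 := lt_of_le_of_ne ha2 haarg
    linarith
  have harg : k.arg = a.arg + b.arg := by
    rw [hk]
    exact Complex.arg_mul ha0 hb0 ⟨by nlinarith [Real.pi_pos], by linarith⟩
  constructor
  · rw [harg]; linarith
  · rw [harg]; exact hsum
end

section
/- Let ε₀, ε₁, μ₀, μ₁ be complex numbers with μ₀μ₁ε₀ε₁ ≠ 0 and (μ₀+μ₁)(ε₀+ε₁) ≠ 0. Then the 4×4 block matrix with rows [−√μ₁/4, √μ₀/4, 0, 0], [0, 0, √ε₁/4, −√ε₀/4], [0, 0, μ₁√ε₁/2, μ₀√ε₀/2], [−√μ₁ε₁/2, −√μ₀ε₀/2, 0, 0] acting on (r₁, r₀, q₁, q₀) is invertible. -/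
/-! The symbol matrix only couples `(r₁, r₀)` with the first and last equations and `(q₁, q₀)`
with the middle two, so after a cyclic permutation of the rows it is block diagonal. Its
determinant is therefore the product of two `2 × 2` determinants,
`√μ₀√μ₁(ε₀ + ε₁)/8` and `√ε₀√ε₁(μ₀ + μ₁)/8`, both nonzero under the hypotheses. -/

theorem Matrix.det_fin_four_of_two_blocks {R : Type*} [CommRing R] (a b c d e f g h : R) :
    !![a, b, 0, 0; 0, 0, c, d; 0, 0, e, f; g, h, 0, 0].det =
      !![a, b; g, h].det * !![c, d; e, f].det := by
  simp [Matrix.det_succ_row_zero, Fin.sum_univ_succ, Fin.succAbove]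
  ring

/-- The leading-order 4×4 symbol matrix of the dielectric system is invertible
provided `μ₀μ₁ε₀ε₁ ≠ 0` and `(μ₀+μ₁)(ε₀+ε₁) ≠ 0`.  Here `sμ_l, sε_l` denote
the square roots `√μ_l, √ε_l`. -/
theorem dielectric_symbol_invertible
    (ε0 ε1 μ0 μ1 sε0 sε1 sμ0 sμ1 : ℂ)
    (hsε0 : sε0 ^ 2 = ε0) (hsε1 : sε1 ^ 2 = ε1)
    (hsμ0 : sμ0 ^ 2 = μ0) (hsμ1 : sμ1 ^ 2 = μ1)
    (h1 : μ0 * μ1 * ε0 * ε1 ≠ 0) (h2 : (μ0 + μ1) * (ε0 + ε1) ≠ 0) :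
    IsUnit (!![-sμ1 / 4, sμ0 / 4, 0, 0;
               0, 0, sε1 / 4, -sε0 / 4;
               0, 0, μ1 * sε1 / 2, μ0 * sε0 / 2;
               -sμ1 * ε1 / 2, -sμ0 * ε0 / 2, 0, 0] : Matrix (Fin 4) (Fin 4) ℂ) := by
  obtain ⟨⟨⟨hμ0, hμ1⟩, hε0⟩, hε1⟩ := by simpa only [mul_ne_zero_iff] using h1
  obtain ⟨hμ, hε⟩ := mul_ne_zero_iff.mp h2
  have hsμ0' : sμ0 ≠ 0 := ne_zero_pow two_ne_zero (hsμ0 ▸ hμ0)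
  have hsμ1' : sμ1 ≠ 0 := ne_zero_pow two_ne_zero (hsμ1 ▸ hμ1)
  have hsε0' : sε0 ≠ 0 := ne_zero_pow two_ne_zero (hsε0 ▸ hε0)
  have hsε1' : sε1 ≠ 0 := ne_zero_pow two_ne_zero (hsε1 ▸ hε1)
  rw [Matrix.isUnit_iff_isUnit_det, Matrix.det_fin_four_of_two_blocks, Matrix.det_fin_two_of,
    Matrix.det_fin_two_of, isUnit_iff_ne_zero]
  have hr : -sμ1 / 4 * (-sμ0 * ε0 / 2) - sμ0 / 4 * (-sμ1 * ε1 / 2) =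
      sμ0 * sμ1 * (ε0 + ε1) / 8 := by
    ring
  have hq : sε1 / 4 * (μ0 * sε0 / 2) - -sε0 / 4 * (μ1 * sε1 / 2) =
      sε0 * sε1 * (μ0 + μ1) / 8 := by
    ring
  rw [hr, hq]
  exact mul_ne_zero
    (div_ne_zero (mul_ne_zero (mul_ne_zero hsμ0' hsμ1') hε) (by norm_num))
    (div_ne_zero (mul_ne_zero (mul_ne_zero hsε0' hsε1') hμ) (by norm_num))
end
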